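/- arXiv:1508.00937 — 4 statements merged into one kernel-verified Lean document; each statement's English description precedes it below -/
import Mathlib

section
/- Let K be a field such that every polynomial of prime degree in K[x] has a root in K. Then K is algebraically closed. -/
/-!
Since `X ^ p - C y` has a root for every prime `p`, the field `K` is perfect. The degrees of
root-free polynomials form an additive submonoid of `ℕ` without primes; a submonoid with gcd `1`
contains all large integers, so some prime `p` divides all these degrees. If `f` were irreducible
of degree `> 1`, its splitting field `M` would be Galois over `K`, and by the primitive element
theorem every intermediate field would have degree `1` or a multiple of `p`. The fixed field of a
Sylow `p`-subgroup of `Gal(M/K)` has degree prime to `p`, so `Gal(M/K)` is a `p`-group and has a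
subgroup of index `p`; its fixed field is generated by a root of an irreducible polynomial of
degree `p`, which has a root in `K`: a contradiction.
-/

open Polynomial Module IntermediateField

theorem AddSubmonoid.exists_prime_dvd_of_forall_prime_notMem (S : AddSubmonoid ℕ)
    (hS : ∀ q : ℕ, q.Prime → q ∉ S) : ∃ p : ℕ, p.Prime ∧ ∀ m ∈ S, p ∣ m := by
  have hgcd : Nat.setGcd S ≠ 1 := by
    intro hgcd
    obtain ⟨N, hN⟩ := Nat.exists_mem_closure_of_ge (S : Set ℕ)
    obtain ⟨q, hNq, hq⟩ := Nat.exists_infinite_primes N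
    exact hS q hq (by simpa using hN q hNq (hgcd ▸ one_dvd q))
  exact ⟨_, Nat.minFac_prime hgcd, fun m hm =>
    (Nat.minFac_dvd _).trans (Nat.setGcd_dvd_of_mem hm)⟩

theorem PerfectField.of_forall_exists_pow_eq {K : Type*} [Field K]
    (h : ∀ p : ℕ, p.Prime → ∀ y : K, ∃ x : K, x ^ p = y) : PerfectField K := by
  obtain ⟨p, hp⟩ := CharP.exists K
  rcases CharP.char_is_prime_or_zero K p with hpp | rfl
  · have : Fact p.Prime := ⟨hpp⟩
    have : ExpChar K p := ExpChar.prime hpp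
    have : PerfectRing K p := PerfectRing.ofSurjective K p (h p hpp)
    exact PerfectRing.toPerfectField K p
  · have := CharP.charP_to_charZero K
    infer_instance

def Polynomial.rootFreeDegrees (R : Type*) [CommRing R] [IsDomain R] :
    AddSubmonoid ℕ where
  carrier := {n | ∃ f : R[X], f.natDegree = n ∧ ∀ x, ¬ f.IsRoot x}
  zero_mem' := ⟨1, natDegree_one, by simp⟩
  add_mem' := by
    rintro _ _ ⟨f, rfl, hf⟩ ⟨g, rfl, hg⟩
    have hf0 : f ≠ 0 := fun h0 => hf 0 (by simp [h0])
    have hg0 : g ≠ 0 := fun h0 => hg 0 (by simp [h0])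
    refine ⟨f * g, natDegree_mul hf0 hg0, fun x hx => ?_⟩
    rcases mul_eq_zero.mp (eval_mul (x := x) ▸ hx : f.eval x * g.eval x = 0) with h | h
    exacts [hf x h, hg x h]

theorem Irreducible.natDegree_mem_rootFreeDegrees {K : Type*} [Field K] {f : K[X]}
    (hf : Irreducible f) (hf1 : f.natDegree ≠ 1) : f.natDegree ∈ rootFreeDegrees K :=
  ⟨f, rfl, fun _ hx =>
    hf1 (natDegree_eq_of_degree_eq_some (degree_eq_one_of_irreducible_of_root hf hx))⟩

theorem exists_irreducible_natDegree_eq_finrank (K E : Type*) [Field K] [Field E] [Algebra K E]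
    [FiniteDimensional K E] [Algebra.IsSeparable K E] :
    ∃ g : K[X], Irreducible g ∧ g.natDegree = finrank K E := by
  obtain ⟨α, hα⟩ := Field.exists_primitive_element K E
  have hint : IsIntegral K α := .of_finite K α
  refine ⟨minpoly K α, minpoly.irreducible hint, ?_⟩
  rw [← adjoin.finrank hint, hα, finrank_top']

theorem Subgroup.exists_index_eq_prime {G : Type*} [Group G] [Finite G] {p : ℕ}
    [hp : Fact p.Prime] (hG : p ∣ Nat.card G)
    (h : ∀ H : Subgroup G, H.index = 1 ∨ p ∣ H.index) :
    ∃ H : Subgroup G, H.index = p := by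
  obtain ⟨P⟩ : Nonempty (Sylow p G) := inferInstance
  have hPtop : (P : Subgroup G) = ⊤ := index_eq_one.mp ((h P).resolve_right P.not_dvd_index)
  obtain ⟨k, hk⟩ := IsPGroup.iff_card.mp P.isPGroup'
  rw [hPtop, card_top] at hk
  have hk0 : k ≠ 0 := by
    rintro rfl
    rw [hk, pow_zero] at hG
    exact hp.out.not_dvd_one hG
  obtain ⟨H, hH⟩ := Sylow.exists_subgroup_card_pow_prime p (hk ▸ pow_dvd_pow p (k.sub_le 1))
  refine ⟨H, Nat.eq_of_mul_eq_mul_right (pow_pos hp.out.pos (k - 1)) ?_⟩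
  calc H.index * p ^ (k - 1) = Nat.card G := hH ▸ H.index_mul_card
    _ = p * p ^ (k - 1) := by
      rw [hk, ← pow_succ', Nat.sub_add_cancel (Nat.one_le_iff_ne_zero.mpr hk0)]

theorem IsGalois.exists_intermediateField_finrank_eq_prime {K M : Type*} [Field K] [Field M]
    [Algebra K M] [FiniteDimensional K M] [IsGalois K M] {p : ℕ} [Fact p.Prime]
    (hM : p ∣ finrank K M)
    (h : ∀ E : IntermediateField K M, finrank K E = 1 ∨ p ∣ finrank K E) :
    ∃ E : IntermediateField K M, finrank K E = p := by
  have hindex (H : Subgroup Gal(M/K)) : finrank K (fixedField H) = H.index := by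
    rw [finrank_eq_fixingSubgroup_index, fixingSubgroup_fixedField]
  obtain ⟨H, hH⟩ := Subgroup.exists_index_eq_prime (G := Gal(M/K)) (p := p)
    (by rwa [IsGalois.card_aut_eq_finrank]) fun H => hindex H ▸ h (fixedField H)
  exact ⟨fixedField H, (hindex H).trans hH⟩

theorem prime_degree_root_implies_algClosed (K : Type) [Field K]
    (h : ∀ f : Polynomial K, f.natDegree.Prime → ∃ x : K, f.IsRoot x) :
    IsAlgClosed K := by
  have : PerfectField K := .of_forall_exists_pow_eq fun p hp y => by
    obtain ⟨x, hx⟩ := h (X ^ p - C y) (by rwa [natDegree_X_pow_sub_C])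
    exact ⟨x, by simpa [sub_eq_zero] using hx⟩
  obtain ⟨p, hp, hpS⟩ := (rootFreeDegrees K).exists_prime_dvd_of_forall_prime_notMem
    fun q hq ⟨f, hfq, hf⟩ => let ⟨x, hx⟩ := h f (hfq ▸ hq); hf x hx
  have : Fact p.Prime := ⟨hp⟩
  have finrank_eq_one_or_dvd {E : Type} [Field E] [Algebra K E] [FiniteDimensional K E] :
      finrank K E = 1 ∨ p ∣ finrank K E := by
    obtain ⟨g, hg, hgE⟩ := exists_irreducible_natDegree_eq_finrank K E
    exact hgE ▸ (em _).imp_right fun hg1 => hpS _ (hg.natDegree_mem_rootFreeDegrees hg1)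
  refine IsAlgClosed.of_exists_root _ fun f hmonic hirr => ?_
  by_contra! hroot
  let M := f.SplittingField
  have : IsGalois K M :=
    IsGalois.of_separable_splitting_field (PerfectField.separable_of_irreducible hirr)
  obtain ⟨α, hα⟩ : ∃ α : M, aeval α f = 0 := by
    simpa only [aeval_def, eval₂_eq_eval_map] using
      (SplittingField.splits f).exists_eval_eq_zero (by rw [degree_map]; exact hirr.degree_pos.ne')
  have hα_deg : finrank K K⟮α⟯ = f.natDegree := by
    rw [adjoin.finrank (.of_finite K α), ← minpoly.eq_of_irreducible_of_monic hirr hα hmonic]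
  have hpM : p ∣ finrank K M := (hpS _ ⟨f, rfl, hroot⟩).trans
    (hα_deg ▸ Dvd.intro _ (finrank_mul_finrank K K⟮α⟯ M))
  obtain ⟨E, hE⟩ :=
    IsGalois.exists_intermediateField_finrank_eq_prime hpM fun E => finrank_eq_one_or_dvd
  obtain ⟨g, hg, hgE⟩ := exists_irreducible_natDegree_eq_finrank K E
  obtain ⟨x, hx⟩ := h g (hgE ▸ hE ▸ hp)
  exact hp.ne_one <| hE ▸ hgE ▸
    natDegree_eq_of_degree_eq_some (degree_eq_one_of_irreducible_of_root hg hx)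
end

section
/- Let d_0, d_1, ..., d_n be positive integers with gcd(d_0, d_1, ..., d_n) = 1. Then there exist non-negative integers k_0, k_1, ..., k_n such that k_0·d_0 + k_1·d_1 + ... + k_n·d_n is a prime number. -/
lemma bezout_finset {ι : Type*} [DecidableEq ι] (s : Finset ι) (d : ι → ℕ) :
    ∃ c : ι → ℤ, ∑ i ∈ s, c i * d i = s.gcd d := by
  classical
  induction s using Finset.induction with
  | empty => exact ⟨0, by simp⟩
  | @insert a s ha ih =>
    obtain ⟨c, hc⟩ := ih
    refine ⟨Function.update (fun i => Nat.gcdB (d a) (s.gcd d) * c i) a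
      (Nat.gcdA (d a) (s.gcd d)), ?_⟩
    rw [Finset.sum_insert ha, Finset.gcd_insert]
    have hupd : ∀ i ∈ s, Function.update (fun i => Nat.gcdB (d a) (s.gcd d) * c i) a
        (Nat.gcdA (d a) (s.gcd d)) i * d i = Nat.gcdB (d a) (s.gcd d) * (c i * d i) := by
      intro i hi
      rw [Function.update_of_ne (by rintro rfl; exact ha hi)]
      ring
    rw [Finset.sum_congr rfl hupd, ← Finset.mul_sum, hc, Function.update_self]
    have := Nat.gcd_eq_gcd_ab (d a) (s.gcd d)
    push_cast [GCDMonoid.gcd] at *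
    linarith [this]

theorem exists_prime_nonneg_combination (n : ℕ) (d : Fin (n + 1) → ℕ)
    (hpos : ∀ i, 0 < d i) (hgcd : Finset.univ.gcd d = 1) :
    ∃ k : Fin (n + 1) → ℕ, (∑ i, k i * d i).Prime := by
  classical
  obtain ⟨c, hc⟩ := bezout_finset (Finset.univ : Finset (Fin (n + 1))) d
  rw [hgcd] at hc
  set D : ℕ := ∑ i, d i with hD
  have hDpos : 0 < D := Finset.sum_pos (fun i _ => hpos i) ⟨⟨0, Nat.succ_pos n⟩, Finset.mem_univ _⟩
  obtain ⟨C, hC0, hC⟩ : ∃ C : ℤ, 0 ≤ C ∧ ∀ i, -C ≤ c i := by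
    obtain ⟨C, hC⟩ := Finset.exists_le (Finset.univ.image (fun i => -(c i)))
    refine ⟨max C 0, le_max_right _ _, fun i => ?_⟩
    have := hC _ (Finset.mem_image_of_mem _ (Finset.mem_univ i))
    have := le_max_left C 0
    linarith
  -- pick a large prime
  obtain ⟨p, hpge, hp⟩ := Nat.exists_infinite_primes (C.toNat * D * D + D)
  set q : ℕ := p / D with hq
  set r : ℕ := p % D with hr
  have hrD : r < D := Nat.mod_lt _ hDpos
  have hpqr : p = q * D + r := by rw [mul_comm]; exact (Nat.div_add_mod p D).symm
  have hqC : C.toNat * D ≤ q := by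
    have : C.toNat * D * D ≤ q * D := by
      calc C.toNat * D * D ≤ p - r := by omega
        _ = q * D := by omega
    exact Nat.le_of_mul_le_mul_right (by omega) hDpos
  -- integer coefficients
  have hKnn : ∀ i, (0 : ℤ) ≤ (q : ℤ) + r * c i := by
    intro i
    have h1 : (r : ℤ) * C ≤ (q : ℤ) := by
      have : (r : ℤ) * C ≤ (D : ℤ) * C := by
        apply mul_le_mul_of_nonneg_right _ hC0
        exact_mod_cast hrD.le
      have h2 : (C.toNat : ℤ) * D ≤ (q : ℤ) := by exact_mod_cast hqC
      rw [Int.toNat_of_nonneg hC0] at h2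
      linarith
    nlinarith [hC i, Nat.cast_nonneg (α := ℤ) r]
  refine ⟨fun i => ((q : ℤ) + r * c i).toNat, ?_⟩
  have hsum : (∑ i, ((q : ℤ) + r * c i).toNat * d i : ℕ) = p := by
    have : ((∑ i, ((q : ℤ) + r * c i).toNat * d i : ℕ) : ℤ) = (p : ℤ) := by
      push_cast
      rw [Finset.sum_congr rfl (fun i _ => by rw [Int.toNat_of_nonneg (hKnn i)])]
      have : ∑ i, ((q : ℤ) + r * c i) * d i
          = q * (∑ i, (d i : ℤ)) + r * (∑ i, c i * d i) := by
        rw [Finset.mul_sum, Finset.mul_sum, ← Finset.sum_add_distrib]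
        exact Finset.sum_congr rfl fun i _ => by ring
      rw [this, hc]
      have hDcast : (∑ i, (d i : ℤ)) = (D : ℤ) := by push_cast [hD]; ring
      rw [hDcast]
      push_cast [hpqr]; ring
    exact_mod_cast this
  rw [hsum]; exact hp
end

section
/- If G is a group of prime order p and A, B ⊆ G\{1} are subsets with |A| = |B|, then there exists a bijection φ : A → B with a·φ(a) ∉ A for all a ∈ A. -/
open Finset Pointwise

theorem matching_in_prime_order_group (G : Type) [Group G] (p : ℕ) (hp : p.Prime)
    (hG : Nat.card G = p) (A B : Finset G) (hA : (1 : G) ∉ A) (hB : (1 : G) ∉ B)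
    (hcard : A.card = B.card) :
    ∃ φ : A → B, Function.Bijective φ ∧ ∀ a : A, (a : G) * (φ a : G) ∉ A := by
  classical
  have hfin : Finite G := Nat.finite_of_card_ne_zero (by rw [hG]; exact hp.pos.ne')
  have hfint : Fintype G := Fintype.ofFinite G
  -- minOrder of G is at least p
  have hmin : (p : ℕ∞) ≤ Monoid.minOrder G := by
    rw [Monoid.le_minOrder]
    intro a ha _
    have hdvd : orderOf a ∣ p := hG ▸ orderOf_dvd_natCard a
    rcases hp.eq_one_or_self_of_dvd _ hdvd with h | h
    · exact absurd (orderOf_eq_one_iff.1 h) ha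
    · exact_mod_cast h.ge
  -- |A| < p since 1 ∉ A
  have hAcard : A.card + 1 ≤ p := by
    have h1 : insert (1 : G) A ⊆ Finset.univ := fun x _ => Finset.mem_univ x
    have h2 := Finset.card_le_card h1
    rw [Finset.card_insert_of_notMem hA] at h2
    have hcu : (Finset.univ : Finset G).card = p := by
      rw [Finset.card_univ, ← Nat.card_eq_fintype_card, hG]
    omega
  -- the bipartite neighborhoods
  set t : A → Finset G := fun a => B.filter (fun b => (a : G) * b ∉ A) with ht
  -- Hall's condition
  have hall : ∀ s : Finset A, s.card ≤ (s.biUnion t).card := by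
    intro s
    by_contra hcon
    push_neg at hcon
    set N := s.biUnion t with hN
    have hNB : N ⊆ B := by
      intro b hb
      obtain ⟨a, _, hab⟩ := Finset.mem_biUnion.1 hb
      exact (Finset.mem_filter.1 hab).1
    set S : Finset G := s.image (fun a : A => (a : G)) with hS
    have hScard : S.card = s.card := Finset.card_image_of_injective _ Subtype.val_injective
    have hSA : S ⊆ A := by
      intro x hx
      obtain ⟨a, _, rfl⟩ := Finset.mem_image.1 hx
      exact a.2
    set T : Finset G := B \ N with hT
    have hsne : s.Nonempty := by
      rcases Finset.eq_empty_or_nonempty s with rfl | h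
      · simp at hcon
      · exact h
    have hSne : S.Nonempty := hsne.image _
    have hTcard : B.card - N.card ≤ T.card := by
      rw [hT, Finset.card_sdiff_of_subset hNB]
    have hTne : T.Nonempty := by
      rw [← Finset.card_pos]
      have hsA : S.card ≤ A.card := Finset.card_le_card hSA
      omega
    have h1T : (1 : G) ∉ T := fun h => hB (Finset.mem_sdiff.1 h).1
    -- S * (insert 1 T) ⊆ A
    have hsub : S * insert 1 T ⊆ A := by
      intro x hx
      obtain ⟨a, ha, b, hb, rfl⟩ := Finset.mem_mul.1 hx
      rcases Finset.mem_insert.1 hb with rfl | hbT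
      · rw [mul_one]; exact hSA ha
      · obtain ⟨hbB, hbN⟩ := Finset.mem_sdiff.1 hbT
        obtain ⟨a', ha's, rfl⟩ := Finset.mem_image.1 ha
        by_contra habA
        exact hbN (Finset.mem_biUnion.2 ⟨a', ha's, Finset.mem_filter.2 ⟨hbB, habA⟩⟩)
    -- Cauchy-Davenport
    have hcd := cauchy_davenport_minOrder_mul (α := G) hSne (Finset.insert_nonempty 1 T)
    have hins : (insert 1 T).card = T.card + 1 := Finset.card_insert_of_notMem h1T
    have hbig : A.card + 1 ≤ S.card + (insert 1 T).card - 1 := by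
      have : A.card < S.card + T.card := by omega
      omega
    have hle : ((A.card + 1 : ℕ) : ℕ∞) ≤ (S * insert 1 T).card := by
      refine le_trans (le_min ?_ ?_) hcd
      · exact le_trans (by exact_mod_cast hAcard) hmin
      · exact_mod_cast hbig
    have : A.card + 1 ≤ (S * insert 1 T).card := by exact_mod_cast hle
    have := Finset.card_le_card hsub
    omega
  obtain ⟨f, hfinj, hf⟩ := (Finset.all_card_le_biUnion_card_iff_exists_injective t).1 hall
  have hfB : ∀ a : A, f a ∈ B := fun a => (Finset.mem_filter.1 (hf a)).1
  refine ⟨fun a => ⟨f a, hfB a⟩, ?_, ?_⟩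
  · rw [Fintype.bijective_iff_injective_and_card]
    constructor
    · intro x y hxy
      exact hfinj (congrArg Subtype.val hxy)
    · simp [Fintype.card_coe, hcard]
  · intro a
    exact (Finset.mem_filter.1 (hf a)).2
end

section
/- A finite field K does not have the maximal linear matching property; that is, there exists a positive integer m such that every field extension L of K with [L : K] = m contains a proper intermediate field M with K ⊊ M ⊊ L of finite degree over K. -/
open IntermediateField Module

/-- Cauchy's theorem gives an element of order `p` in the Galois group; its fixed field has
codimension `p`. -/
theorem IsGalois.exists_intermediateField_bot_lt_lt_top {K L : Type*} [Field K] [Field L]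
    [Algebra K L] [FiniteDimensional K L] [IsGalois K L] {p : ℕ} (hp : p.Prime)
    (hdvd : p ∣ finrank K L) (hne : p ≠ finrank K L) :
    ∃ M : IntermediateField K L, ⊥ < M ∧ M < ⊤ := by
  have : Fact p.Prime := ⟨hp⟩
  obtain ⟨g, hg⟩ := exists_prime_orderOf_dvd_card' (G := Gal(L/K)) p
    (by rwa [IsGalois.card_aut_eq_finrank])
  have hcodim : finrank (fixedField (Subgroup.zpowers g)) L = p := by
    rw [finrank_fixedField_eq_card, Nat.card_zpowers, hg]
  refine ⟨fixedField (Subgroup.zpowers g), bot_lt_iff_ne_bot.2 ?_, lt_top_iff_ne_top.2 ?_⟩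
  · intro h
    rw [h, finrank_bot'] at hcodim
    exact hne hcodim.symm
  · intro h
    rw [h, IntermediateField.finrank_top] at hcodim
    exact hp.one_lt.ne hcodim

theorem finite_field_not_maximal_matching (K : Type) [Field K] [Finite K] :
    ∃ m : ℕ, 0 < m ∧ ∀ (L : Type) [Field L] [Algebra K L],
      Module.finrank K L = m →
      ∃ M : IntermediateField K L, ⊥ < M ∧ M < ⊤ ∧ FiniteDimensional K M := by
  refine ⟨4, by norm_num, fun L _ _ hrank => ?_⟩
  have : FiniteDimensional K L := .of_finrank_pos (by omega)
  have : Finite L := Module.finite_of_finite K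
  obtain ⟨M, hbot, htop⟩ := IsGalois.exists_intermediateField_bot_lt_lt_top Nat.prime_two
    (by rw [hrank]; norm_num) (by omega)
  exact ⟨M, hbot, htop, inferInstance⟩
end
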